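/- Let A and B be n×n complex positive definite matrices, and define A♮B := A^{1/2}(B^{1/2}A^{-1}B^{1/2})^{1/2}A^{1/2}. Then the spectral norm (largest singular value) satisfies ‖A♮B‖ ≥ ‖A^{1/2}B^{1/2}‖. -/

import Mathlib

open scoped ComplexOrder Matrix Classical

/-- The positive semidefinite square root of a positive semidefinite matrix
(junk value `0` if the matrix is not positive semidefinite). -/
noncomputable def sqrtm {n : ℕ} (A : Matrix (Fin n) (Fin n) ℂ) : Matrix (Fin n) (Fin n) ℂ :=
  if h : A.PosSemidef then
    (h.1.eigenvectorUnitary : Matrix (Fin n) (Fin n) ℂ) *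
      Matrix.diagonal ((↑) ∘ (√·) ∘ h.1.eigenvalues) *
      (star h.1.eigenvectorUnitary : Matrix (Fin n) (Fin n) ℂ)
  else 0

/-- The absolute value `|X| = (Xᴴ X)^{1/2}` of a matrix. -/
noncomputable def absm {n : ℕ} (X : Matrix (Fin n) (Fin n) ℂ) : Matrix (Fin n) (Fin n) ℂ :=
  sqrtm (Xᴴ * X)

/-- The spectral norm of a (rectangular) complex matrix: the operator norm of the
induced linear map between Euclidean spaces, i.e. the largest singular value. -/
noncomputable def specNorm {m n : ℕ} (X : Matrix (Fin m) (Fin n) ℂ) : ℝ :=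
  ‖LinearMap.toContinuousLinearMap (Matrix.toEuclideanLin X)‖


/-- The mean `A ♮ B := A^{1/2} (B^{1/2} A⁻¹ B^{1/2})^{1/2} A^{1/2}` of positive definite
matrices. -/
noncomputable def naturalMean {n : ℕ} (A B : Matrix (Fin n) (Fin n) ℂ) :
    Matrix (Fin n) (Fin n) ℂ :=
  sqrtm A * sqrtm (sqrtm B * A⁻¹ * sqrtm B) * sqrtm A

/-!
Write `x = A^{1/2}`, `y = B^{1/2}` and `c = (y A⁻¹ y)^{1/2}`, so that `A ♮ B = x c x`, and let
`t = ‖x y‖`. Factoring `x y = (x c^{1/2}) (c^{-1/2} y)` gives `t² ≤ ‖x c x‖ ‖y c⁻¹ y‖`. On the other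
hand `y A y = (x y)^* (x y) ≤ t²`, and conjugating by `B⁻¹` yields `c⁻² = y⁻¹ A y⁻¹ ≤ (t B⁻¹)²`.
Operator monotonicity of the square root gives `c⁻¹ ≤ t B⁻¹`, i.e. `y c⁻¹ y ≤ t`, so
`t² ≤ ‖A ♮ B‖ t`. Nothing beyond the C⋆-identity and the continuous functional calculus is used,
so the argument runs in an arbitrary unital C⋆-algebra.
-/

section CStarAlgebra

variable {𝒜 : Type*} [CStarAlgebra 𝒜] [PartialOrder 𝒜] [StarOrderedRing 𝒜]

open CFC Ring

lemma norm_mul_sq_le_norm_conjugate_mul_norm_conjugate_ringInverse (x y : 𝒜) {c : 𝒜}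
    (hc : IsStrictlyPositive c) :
    ‖x * y‖ ^ 2 ≤ ‖x * c * star x‖ * ‖star y * c⁻¹ʳ * y‖ := by
  set d := sqrt c
  have hd : IsUnit d := hc.isUnit_cfcSqrt
  have hfactor : x * y = (x * d) * (d⁻¹ʳ * y) := by
    rw [mul_assoc, ← mul_assoc d, Ring.mul_inverse_cancel d hd, one_mul]
  have hleft : ‖x * d‖ ^ 2 = ‖x * c * star x‖ := by
    rw [sq, ← CStarRing.norm_self_mul_star, star_mul, (sqrt_nonneg c).isSelfAdjoint.star_eq,
      ← mul_assoc, mul_assoc x, sqrt_mul_sqrt_self c hc.nonneg]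
  have hright : ‖d⁻¹ʳ * y‖ ^ 2 = ‖star y * c⁻¹ʳ * y‖ := by
    have he : d⁻¹ʳ = sqrt c⁻¹ʳ := sqrt_ringInverse.symm
    rw [sq, ← CStarRing.norm_star_mul_self, star_mul, he, (sqrt_nonneg c⁻¹ʳ).isSelfAdjoint.star_eq,
      mul_assoc, ← mul_assoc (sqrt _), sqrt_mul_sqrt_self _ hc.ringInverse.nonneg, mul_assoc]
  calc ‖x * y‖ ^ 2 ≤ (‖x * d‖ * ‖d⁻¹ʳ * y‖) ^ 2 := by
        rw [hfactor]; gcongr; exact norm_mul_le _ _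
    _ = _ := by rw [mul_pow, hleft, hright]

lemma conjugate_ringInverse_sqrt_le_of_conjugate_le {a y : 𝒜} (ha : IsUnit a) (hy_unit : IsUnit y)
    (hy : IsSelfAdjoint y) {r : ℝ} (hr : 0 ≤ r) (h : y * a * y ≤ algebraMap ℝ 𝒜 (r ^ 2)) :
    y * (sqrt (y * a⁻¹ʳ * y))⁻¹ʳ * y ≤ algebraMap ℝ 𝒜 r := by
  set w := y⁻¹ʳ
  have hwy : w * y = 1 := Ring.inverse_mul_cancel y hy_unit
  have hyw : y * w = 1 := Ring.mul_inverse_cancel y hy_unit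
  have hw2 : 0 ≤ w * w := by
    have := star_mul_self_nonneg w
    rwa [hy.ringInverse.star_eq] at this
  have hinv : (y * a⁻¹ʳ * y)⁻¹ʳ = w * a * w := by
    rw [Ring.inverse_mul (.inr hy_unit), Ring.inverse_mul (.inl hy_unit), Ring.inverse_inverse ha,
      mul_assoc]
  have hsq : w * a * w ≤ (r • (w * w)) ^ 2 := by
    calc w * a * w = (w * w) * (y * a * y) * (w * w) := by
          simp only [mul_assoc]; rw [← mul_assoc y w, hyw, one_mul, ← mul_assoc w y, hwy, one_mul]
      _ ≤ (w * w) * algebraMap ℝ 𝒜 (r ^ 2) * (w * w) := conjugate_le_conjugate_of_nonneg h hw2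
      _ = (r • (w * w)) ^ 2 := by
          rw [Algebra.algebraMap_eq_smul_one, sq, sq]
          simp only [mul_smul_comm, smul_mul_assoc, smul_smul, mul_one, mul_assoc]
  calc y * (sqrt (y * a⁻¹ʳ * y))⁻¹ʳ * y = y * sqrt (w * a * w) * y := by
        rw [← sqrt_ringInverse, hinv]
    _ ≤ y * (r • (w * w)) * y := by
        refine hy.conjugate_le_conjugate ?_
        simpa [sqrt_sq _ (smul_nonneg hr hw2)] using sqrt_le_sqrt _ _ hsq
    _ = algebraMap ℝ 𝒜 r := by
        rw [Algebra.algebraMap_eq_smul_one, mul_smul_comm, smul_mul_assoc, ← mul_assoc, hyw,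
          one_mul, hwy]

theorem norm_sqrt_mul_sqrt_le_norm_sqrt_mul_sqrt_conjugate_mul_sqrt {a b : 𝒜}
    (ha : IsStrictlyPositive a) (hb : IsStrictlyPositive b) :
    ‖sqrt a * sqrt b‖ ≤ ‖sqrt a * sqrt (sqrt b * a⁻¹ʳ * sqrt b) * sqrt a‖ := by
  set x := sqrt a
  set y := sqrt b
  set c := sqrt (y * a⁻¹ʳ * y)
  have hx : IsSelfAdjoint x := (sqrt_nonneg a).isSelfAdjoint
  have hy : IsSelfAdjoint y := (sqrt_nonneg b).isSelfAdjoint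
  have hc : IsStrictlyPositive c :=
    .sqrt _ ((hb.isUnit_cfcSqrt.isStrictlyPositive_iff_conjugate_of_isSelfAdjoint _ _ hy).2
      ha.ringInverse)
  have hyay : star (x * y) * (x * y) = y * a * y := by
    rw [star_mul, hx.star_eq, hy.star_eq, mul_assoc, ← mul_assoc x, sqrt_mul_sqrt_self a ha.nonneg,
      mul_assoc]
  have hconj : ‖y * c⁻¹ʳ * y‖ ≤ ‖x * y‖ := by
    rw [CStarAlgebra.norm_le_iff_le_algebraMap _ (norm_nonneg _)
      (hy.conjugate_nonneg hc.ringInverse.nonneg)]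
    exact conjugate_ringInverse_sqrt_le_of_conjugate_le ha.isUnit hb.isUnit_cfcSqrt hy
      (norm_nonneg _) (hyay ▸ CStarAlgebra.star_mul_le_algebraMap_norm_sq)
  have hsq : ‖x * y‖ ^ 2 ≤ ‖x * c * x‖ * ‖x * y‖ := by
    have := norm_mul_sq_le_norm_conjugate_mul_norm_conjugate_ringInverse x y hc
    rw [hx.star_eq, hy.star_eq] at this
    exact this.trans (by gcongr)
  nlinarith [norm_nonneg (x * y), norm_nonneg (x * c * x)]

end CStarAlgebra

open scoped MatrixOrder Matrix.Norms.L2Operator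

lemma sqrtm_eq_cfcSqrt {n : ℕ} (A : Matrix (Fin n) (Fin n) ℂ) : sqrtm A = CFC.sqrt A := by
  by_cases hA : A.PosSemidef
  · rw [sqrtm, dif_pos hA, CFC.sqrt_eq_real_sqrt A hA.nonneg, cfcₙ_eq_cfc, hA.1.cfc_eq]
    rfl
  · rw [sqrtm, dif_neg hA, CFC.sqrt_of_not_nonneg (by rwa [Matrix.nonneg_iff_posSemidef])]

/-- For positive definite `A, B`, the spectral norm satisfies `‖A ♮ B‖ ≥ ‖A^{1/2} B^{1/2}‖`. -/
theorem specNorm_sqrt_mul_sqrt_le_specNorm_naturalMean {n : ℕ}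
    (A B : Matrix (Fin n) (Fin n) ℂ) (hA : A.PosDef) (hB : B.PosDef) :
    specNorm (sqrtm A * sqrtm B) ≤ specNorm (naturalMean A B) := by
  simp only [naturalMean, sqrtm_eq_cfcSqrt, Matrix.nonsing_inv_eq_ringInverse]
  -- `specNorm` unfolds to the L² operator norm, which is the C⋆-norm of `Matrix.instCStarAlgebra`.
  exact norm_sqrt_mul_sqrt_le_norm_sqrt_mul_sqrt_conjugate_mul_sqrt hA.isStrictlyPositive
    hB.isStrictlyPositive
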